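/- For every positive even integer m, there exist infinitely many D_m-abundant numbers, i.e., infinitely many positive integers n with D_m(n) > n. -/

import Mathlib

open Finset

/-- The Schemmel totient function: `L m 0 = 0`, `L m 1 = 1`, and for `n > 1`,
`L m n = ∏ p^(α-1) (p - m)` over the canonical factorization of `n` if every
prime divisor of `n` exceeds `m`, and `0` otherwise. -/
def L (m n : ℕ) : ℕ :=
  if n ≤ 1 then n
  else if ∀ p ∈ n.primeFactors, m < p then
    ∏ p ∈ n.primeFactors, p ^ (n.factorization p - 1) * (p - m)
  else 0

/-- `R m n` is the least positive `k` with `L_m^{(k)}(n) ∈ {0, 1}`. -/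
noncomputable def R (m n : ℕ) : ℕ :=
  sInf {k | 0 < k ∧ ((L m)^[k] n = 0 ∨ (L m)^[k] n = 1)}

/-- `H m n = L_m^{(R_m(n))}(n)`. -/
noncomputable def H (m n : ℕ) : ℕ := (L m)^[R m n] n

/-- `D m 1 = 0` and `D m n = ∑_{i=1}^{R_m(n)} L_m^{(i)}(n)` for `n > 1`. -/
noncomputable def D (m n : ℕ) : ℕ :=
  if n = 1 then 0 else ∑ i ∈ Finset.Icc 1 (R m n), (L m)^[i] n

/-! Choose `a` by the Chinese remainder theorem with `a ≢ 0` and `a ≢ m` modulo every prime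
`q ≤ 2m` (for `q = 2` this needs `m` even). Dirichlet's theorem gives infinitely many primes
`p ≡ a` modulo the primorial of `2m`. For such `p`, `L_m(p) = p - m` has only prime factors
`q > 2m`, so each factor `q - m` of `L_m(p - m)` exceeds `m`, and
`D_m(p) = (p - m) + D_m(p - m) ≥ (p - m) + L_m(p - m) > p`. -/

open Nat

lemma L_of_forall_lt {m n : ℕ} (hn : 1 < n) (h : ∀ p ∈ n.primeFactors, m < p) :
    L m n = ∏ p ∈ n.primeFactors, p ^ (n.factorization p - 1) * (p - m) := by
  rw [L, if_neg (by omega), if_pos h]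

lemma L_prime {m p : ℕ} (hp : p.Prime) (h : m < p) : L m p = p - m := by
  rw [L_of_forall_lt hp.one_lt (by simpa [hp.primeFactors] using h), hp.primeFactors,
    prod_singleton, hp.factorization_self, pow_zero, one_mul]

lemma L_le_totient {m : ℕ} (hm : 0 < m) (n : ℕ) : L m n ≤ φ n := by
  rcases le_or_gt n 1 with hn | hn
  · interval_cases n <;> simp [L]
  unfold L
  rw [if_neg (by omega)]
  split
  · rw [totient_eq_prod_factorization (by omega), Finsupp.prod, support_factorization]
    exact prod_le_prod' fun p _ => Nat.mul_le_mul_left _ (by omega)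
  · exact Nat.zero_le _

lemma L_lt_self {m n : ℕ} (hm : 0 < m) (hn : 1 < n) : L m n < n :=
  (L_le_totient hm n).trans_lt (totient_lt n hn)

lemma lt_L_of_forall_primeFactors_gt {m n : ℕ} (hn : 1 < n)
    (h : ∀ p ∈ n.primeFactors, 2 * m < p) : m < L m n := by
  obtain ⟨p, hp⟩ := nonempty_primeFactors.2 hn
  rw [L_of_forall_lt hn fun q hq => by have := h q hq; omega]
  have hpos : ∀ q ∈ n.primeFactors, 1 ≤ q ^ (n.factorization q - 1) * (q - m) := fun q hq =>
    Nat.one_le_iff_ne_zero.2 <| mul_ne_zero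
      (pow_ne_zero _ (prime_of_mem_primeFactors hq).ne_zero) (by have := h q hq; omega)
  calc m < p - m := by have := h p hp; omega
    _ ≤ p ^ (n.factorization p - 1) * (p - m) :=
      Nat.le_mul_of_pos_left _ (pow_pos (prime_of_mem_primeFactors hp).pos _)
    _ ≤ _ := single_le_prod' hpos hp

lemma sInf_pos_iterate_eq_succ {α : Type*} {f : α → α} {P : α → Prop} {x : α} (hx : ¬ P (f x))
    (hne : {k | 0 < k ∧ P (f^[k] x)}.Nonempty) :
    sInf {k | 0 < k ∧ P (f^[k] x)} = sInf {k | 0 < k ∧ P (f^[k] (f x))} + 1 := by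
  rw [← Nat.sInf_add (le_csInf hne fun k hk => hk.1)]
  congr 2
  ext k
  cases k <;> simp [Function.iterate_succ_apply, hx]

lemma sum_Icc_one_iterate_succ {α : Type*} [AddCommMonoid α] (f : α → α) (x : α) (r : ℕ) :
    ∑ i ∈ Icc 1 (r + 1), f^[i] x = f x + ∑ i ∈ Icc 1 r, f^[i] (f x) := by
  induction r with
  | zero => simp
  | succ r ih =>
    rw [sum_Icc_succ_top (by omega), ih, sum_Icc_succ_top (by omega), add_assoc,
      ← Function.iterate_succ_apply]

lemma nonempty_setOf_iterate_L_eq_zero_or_one {m : ℕ} (hm : 0 < m) (n : ℕ) :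
    {k | 0 < k ∧ ((L m)^[k] n = 0 ∨ (L m)^[k] n = 1)}.Nonempty := by
  induction n using Nat.strong_induction_on with
  | _ n ih =>
    rcases le_or_gt n 1 with hn | hn
    · exact ⟨1, one_pos, by rw [Function.iterate_one, L, if_pos hn]; omega⟩
    · obtain ⟨k, -, hLk⟩ := ih (L m n) (L_lt_self hm hn)
      exact ⟨k + 1, k.succ_pos, by rwa [Function.iterate_succ_apply]⟩

lemma R_pos {m : ℕ} (hm : 0 < m) (n : ℕ) : 0 < R m n :=
  (Nat.sInf_mem (nonempty_setOf_iterate_L_eq_zero_or_one hm n)).1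

lemma R_eq_R_L_add_one {m n : ℕ} (hm : 0 < m) (hn : 1 < L m n) : R m n = R m (L m n) + 1 :=
  sInf_pos_iterate_eq_succ (P := fun x => x = 0 ∨ x = 1) (by omega)
    (nonempty_setOf_iterate_L_eq_zero_or_one hm n)

lemma D_eq_L_add_D_L {m n : ℕ} (hm : 0 < m) (hn : 1 < L m n) : D m n = L m n + D m (L m n) := by
  have hn1 : n ≠ 1 := by rintro rfl; simp [L] at hn
  rw [D, if_neg hn1, D, if_neg hn.ne', R_eq_R_L_add_one hm hn, sum_Icc_one_iterate_succ]

lemma L_le_D {m n : ℕ} (hm : 0 < m) (hn : n ≠ 1) : L m n ≤ D m n := by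
  rw [D, if_neg hn]
  exact single_le_sum (f := fun i => (L m)^[i] n) (fun _ _ => Nat.zero_le _)
    (mem_Icc.2 ⟨le_rfl, R_pos hm n⟩)

lemma lt_D_of_prime {m p : ℕ} (hm : 0 < m) (hp : p.Prime) (hmp : m + 1 < p)
    (h : ∀ q ∈ (p - m).primeFactors, 2 * m < q) : p < D m p := by
  have hLp := L_prime hp (by omega : m < p)
  have hu : 1 < p - m := by omega
  rw [D_eq_L_add_D_L hm (hLp ▸ hu), hLp]
  have := lt_L_of_forall_primeFactors_gt hu h
  have := L_le_D hm hu.ne'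
  omega

lemma exists_not_modEq_zero_and_not_modEq {m q : ℕ} (hm : Even m) (hq : 1 < q) :
    ∃ r, ¬ r ≡ 0 [MOD q] ∧ ¬ r ≡ m [MOD q] := by
  unfold Nat.ModEq
  by_cases h : m % q = 1
  · have hq2 : q ≠ 2 := by rintro rfl; rw [Nat.even_iff] at hm; omega
    refine ⟨2, ?_, ?_⟩ <;> rw [Nat.mod_eq_of_lt (by omega)] <;> simp [h]
  · refine ⟨1, ?_, ?_⟩ <;> rw [Nat.mod_eq_of_lt hq] <;> simp [Ne.symm h]

lemma exists_forall_not_modEq_zero_and_not_modEq {m : ℕ} (hm : Even m) (S : Finset ℕ)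
    (hS : ∀ q ∈ S, q.Prime) : ∃ a, ∀ q ∈ S, ¬ a ≡ 0 [MOD q] ∧ ¬ a ≡ m [MOD q] := by
  choose r hr using fun q : S => exists_not_modEq_zero_and_not_modEq hm (hS q q.2).one_lt
  obtain ⟨a, ha⟩ := Nat.chineseRemainderOfFinset r (↑) univ (fun q _ => (hS q q.2).ne_zero)
    fun q _ q' _ hne => (coprime_primes (hS q q.2) (hS q' q'.2)).2 (Subtype.coe_injective.ne hne)
  refine ⟨a, fun q hq => ?_⟩
  have har := ha ⟨q, hq⟩ (mem_univ _)
  exact ⟨fun h => (hr ⟨q, hq⟩).1 (har.symm.trans h), fun h => (hr ⟨q, hq⟩).2 (har.symm.trans h)⟩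

lemma coprime_primorial {a B : ℕ} (ha : ∀ q ∈ primesLE B, ¬ a ≡ 0 [MOD q]) :
    a.Coprime (primorial B) :=
  coprime_prod_right_iff.2 fun q hq => (Nat.coprime_comm.1 <|
    (mem_primesLE.1 hq).2.coprime_iff_not_dvd.2 fun hdvd => ha q hq (modEq_zero_iff_dvd.2 hdvd))

lemma lt_of_mem_primeFactors_sub {a B m p q : ℕ} (hpa : p ≡ a [MOD primorial B])
    (ha : ∀ q ∈ primesLE B, ¬ a ≡ m [MOD q]) (hq : q ∈ (p - m).primeFactors) : B < q := by
  by_contra! hqB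
  have hqS : q ∈ primesLE B := mem_primesLE.2 ⟨hqB, prime_of_mem_primeFactors hq⟩
  have hmp : m ≤ p := by have := (mem_primeFactors.1 hq).2.2; omega
  have hpm : p ≡ m [MOD q] := ((modEq_iff_dvd' hmp).2 (dvd_of_mem_primeFactors hq)).symm
  exact ha q hqS ((hpa.of_dvd (dvd_prod_of_mem _ hqS)).symm.trans hpm)

theorem infinitely_many_Dm_abundant (m : ℕ) (hm : 0 < m) (hme : Even m) :
    {n : ℕ | 0 < n ∧ n < D m n}.Infinite := by
  obtain ⟨a, ha⟩ := exists_forall_not_modEq_zero_and_not_modEq hme (primesLE (2 * m))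
    fun q hq => (mem_primesLE.1 hq).2
  have hcop : a.Coprime (primorial (2 * m)) := coprime_primorial fun q hq => (ha q hq).1
  refine ((infinite_setOfPred_prime_and_modEq (primorial_ne_zero _) hcop).sdiff
    (Set.finite_Iic (m + 1))).mono ?_
  rintro p ⟨⟨hp, hpa⟩, hpm⟩
  exact ⟨hp.pos, lt_D_of_prime hm hp (by simpa using hpm)
    fun q hq => lt_of_mem_primeFactors_sub hpa (fun q hq => (ha q hq).2) hq⟩
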